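/- arXiv:math/0610684 — 2 statements merged into one kernel-verified Lean document; each statement's English description precedes it below -/
import Mathlib

section
/- For every positive integer m and every n ≥ 1, the number of sublattices of index m in ℤ^n equals the sum over all factorizations m = d₁·d₂⋯dₙ (ordered tuples of positive integers) of d₁^0·d₂^1⋯dₙ^{n-1}. -/
/-- The number of sublattices (subgroups) of index `m` in `ℤ^n`. -/
noncomputable def sublatticeCount (n m : ℕ) : ℕ :=
  Nat.card {H : AddSubgroup (Fin n → ℤ) // H.index = m}

/-!
Write `ℤ^(n+1) = ℤ × ℤ^n`. A subgroup `H ≤ ℤ × A` of index `m` is determined by `H₀ = H ∩ A`,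
whose index `e` divides `m`, together with the class modulo `H₀` of any `a` with `(m / e, a) ∈ H`,
and every class occurs. So the subgroups of index `m` of `ℤ × A` number
`∑ e ∣ m, e · #{H₀ ≤ A of index e}`. The sum over ordered factorizations obeys the same
recursion: the first factor carries exponent `0`, and lowering every other exponent by one costs
the factor `d₁ ⋯ dₙ = e`. Counting with `ENat.card` spares us from proving beforehand that these
families of subgroups are finite.
-/

open Finset Function AddSubgroup

namespace ENat

universe u

theorem card_sigma {ι : Type*} [Fintype ι] (β : ι → Type*) :
    card (Σ i, β i) = ∑ i, card (β i) := by
  by_cases hfin : ∀ i, Finite (β i)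
  · simp only [card_eq_coe_natCard, Nat.card_sigma, Nat.cast_sum]
  · obtain ⟨i, hi⟩ := not_forall.1 hfin
    have : Infinite (β i) := not_finite_iff_infinite.1 hi
    have : Infinite (Σ i, β i) := Infinite.of_injective (Sigma.mk i) sigma_mk_injective
    rw [card_eq_top_of_infinite, eq_comm, eq_top_iff, ← card_eq_top_of_infinite (α := β i)]
    exact single_le_sum (fun j _ => (zero_le : 0 ≤ card (β j))) (mem_univ i)

theorem card_sigma_of_card_eq {ι : Type u} {β : ι → Type u} {c : ℕ} (h : ∀ i, card (β i) = c) :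
    card (Σ i, β i) = card ι * c := by
  have hc : ∀ i, Cardinal.mk (β i) = c := fun i => Cardinal.toENat_eq_natCast.1 (h i)
  rw [card, Cardinal.mk_sigma, funext hc, Cardinal.sum_const', map_mul, Cardinal.toENat_nat]
  rfl

end ENat

namespace AddSubgroup

theorem index_eq_relIndex_ker_mul_index_map {G G' : Type*} [AddGroup G] [AddGroup G']
    {f : G →+ G'} (hf : Surjective f) (H : AddSubgroup G) [H.Normal] :
    H.index = H.relIndex f.ker * (H.map f).index := by
  rw [← relIndex_mul_index (le_sup_left : H ≤ H ⊔ f.ker), relIndex_sup_left, ← comap_map_eq,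
    index_comap_of_surjective _ hf]

theorem eq_zmultiples_index (K : AddSubgroup ℤ) : K = zmultiples (K.index : ℤ) := by
  obtain ⟨a, rfl⟩ := Int.subgroup_cyclic K
  rw [← zmultiples_eq_closure, Int.index_zmultiples, Int.zmultiples_natAbs]

theorem enatCard_index_congr {G G' : Type*} [AddGroup G] [AddGroup G'] (e : G ≃+ G') (m : ℕ) :
    ENat.card {H : AddSubgroup G // H.index = m} = ENat.card {H : AddSubgroup G' // H.index = m} :=
  ENat.card_congr <| e.mapAddSubgroup.toEquiv.subtypeEquiv fun H => by
    simp [AddEquiv.mapAddSubgroup, index_map_equiv]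

theorem enatCard_index_of_subsingleton {G : Type*} [AddGroup G] [Subsingleton G] (m : ℕ) :
    ENat.card {H : AddSubgroup G // H.index = m} = if m = 1 then 1 else 0 := by
  split_ifs with hm
  · subst hm
    rw [ENat.card_eq_one_iff_unique]
    exact ⟨⟨⟨⊤, index_top⟩, fun H => Subtype.ext (Subsingleton.elim _ _)⟩⟩
  · rw [ENat.card_eq_zero_iff_empty]
    refine ⟨fun H => hm ?_⟩
    rw [← H.2, index_eq_one]
    exact Subsingleton.elim _ _

end AddSubgroup

section IntProd

variable {A : Type*} [AddCommGroup A] {H₀ : AddSubgroup A} {d : ℤ} {m : ℕ}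

local notation "inr" => AddMonoidHom.inr ℤ A
local notation "fst" => AddMonoidHom.fst ℤ A

theorem AddSubgroup.index_eq_index_comap_inr_mul_index_map_fst (H : AddSubgroup (ℤ × A)) :
    H.index = (H.comap inr).index * (H.map fst).index := by
  rw [H.index_eq_relIndex_ker_mul_index_map (f := fst) Prod.fst_surjective, index_comap]
  congr 2
  ext ⟨k, a⟩
  simp [eq_comm, mem_prod]

/-- The subgroup generated by `0 × H₀` and `(d, a)`, for any `a` in the class `q`. -/
def extendSubgroup (H₀ : AddSubgroup A) (d : ℤ) (q : A ⧸ H₀) : AddSubgroup (ℤ × A) where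
  carrier := {p | ∃ t : ℤ, p.1 = t * d ∧ (p.2 : A ⧸ H₀) = t • q}
  zero_mem' := ⟨0, by simp⟩
  add_mem' := by
    rintro _ _ ⟨s, hs1, hs2⟩ ⟨t, ht1, ht2⟩
    exact ⟨s + t, by simp [hs1, ht1, add_mul], by simp [hs2, ht2, add_smul]⟩
  neg_mem' := by
    rintro _ ⟨t, ht1, ht2⟩
    exact ⟨-t, by simp [ht1], by simp [ht2]⟩

theorem mem_extendSubgroup {q : A ⧸ H₀} {p : ℤ × A} :
    p ∈ extendSubgroup H₀ d q ↔ ∃ t : ℤ, p.1 = t * d ∧ (p.2 : A ⧸ H₀) = t • q :=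
  Iff.rfl

theorem comap_inr_extendSubgroup (hd : d ≠ 0) (q : A ⧸ H₀) :
    (extendSubgroup H₀ d q).comap inr = H₀ := by
  ext a
  simp [mem_extendSubgroup, hd, QuotientAddGroup.eq_zero_iff]

theorem map_fst_extendSubgroup (q : A ⧸ H₀) :
    (extendSubgroup H₀ d q).map fst = zmultiples d := by
  ext k
  rw [AddSubgroup.mem_map, mem_zmultiples_iff]
  constructor
  · rintro ⟨p, ⟨t, ht, -⟩, rfl⟩
    exact ⟨t, by simp [ht]⟩
  · rintro ⟨t, rfl⟩
    obtain ⟨a, ha⟩ := QuotientAddGroup.mk_surjective (t • q)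
    exact ⟨(t * d, a), ⟨t, rfl, ha⟩, by simp⟩

theorem extendSubgroup_injective (hd : d ≠ 0) : Injective (extendSubgroup H₀ d) := by
  intro q q' h
  obtain ⟨a, rfl⟩ := QuotientAddGroup.mk_surjective q
  have : ((d, a) : ℤ × A) ∈ extendSubgroup H₀ d q' := h ▸ ⟨1, by simp, by simp⟩
  obtain ⟨t, ht, ha⟩ := this
  obtain rfl : t = 1 := by simpa [hd] using ht
  simpa using ha

theorem eq_extendSubgroup {H : AddSubgroup (ℤ × A)} {a : A} (hd : H.map fst = zmultiples d)
    (ha : ((d, a) : ℤ × A) ∈ H) : H = extendSubgroup (H.comap inr) d (a : A ⧸ H.comap inr) := by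
  ext ⟨k, x⟩
  rw [mem_extendSubgroup]
  constructor
  · intro hx
    obtain ⟨t, rfl⟩ : ∃ t : ℤ, t * d = k := by
      have hk : k ∈ H.map fst := ⟨_, hx, rfl⟩
      simpa [hd, mem_zmultiples_iff] using hk
    refine ⟨t, rfl, ?_⟩
    rw [← QuotientAddGroup.mk_zsmul, eq_comm, QuotientAddGroup.eq, mem_comap]
    convert sub_mem hx (zsmul_mem ha t) using 1
    ext <;> simp [neg_add_eq_sub]
  · rintro ⟨t, rfl, hx⟩
    rw [← QuotientAddGroup.mk_zsmul, eq_comm, QuotientAddGroup.eq, mem_comap] at hx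
    convert add_mem hx (zsmul_mem ha t) using 1
    ext <;> simp

theorem enatCard_comap_inr_map_fst (H₀ : AddSubgroup A) (hd : d ≠ 0) :
    ENat.card {H : AddSubgroup (ℤ × A) // H.comap inr = H₀ ∧ H.map fst = zmultiples d} =
      ENat.card (A ⧸ H₀) := by
  refine (ENat.card_congr (Equiv.ofBijective
    (fun q => ⟨extendSubgroup H₀ d q, comap_inr_extendSubgroup hd q, map_fst_extendSubgroup q⟩)
    ⟨fun q q' h => extendSubgroup_injective hd (congrArg Subtype.val h), ?_⟩)).symm
  rintro ⟨H, rfl, hH⟩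
  obtain ⟨⟨k, a⟩, ha, rfl⟩ : d ∈ H.map fst := hH ▸ mem_zmultiples d
  exact ⟨a, Subtype.ext (eq_extendSubgroup hH ha).symm⟩

theorem map_fst_eq_zmultiples_div {H : AddSubgroup (ℤ × A)} (hH : H.index = m) (hm : m ≠ 0) :
    H.map fst = zmultiples ((m / (H.comap inr).index : ℕ) : ℤ) := by
  have h := index_eq_index_comap_inr_mul_index_map_fst H
  rw [hH] at h
  have h0 : (H.comap inr).index ≠ 0 := left_ne_zero_of_mul (h ▸ hm)
  rw [h, Nat.mul_div_cancel_left _ (Nat.pos_of_ne_zero h0), ← eq_zmultiples_index]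

noncomputable def subgroupsOfIndexEquivSigma (hm : m ≠ 0) :
    {H : AddSubgroup (ℤ × A) // H.index = m} ≃
      Σ e : m.divisors, Σ H₀ : {H₀ : AddSubgroup A // H₀.index = e},
        {H : AddSubgroup (ℤ × A) // H.comap inr = H₀ ∧ H.map fst = zmultiples ((m / e : ℕ) : ℤ)}
    where
  toFun H := ⟨⟨(H.1.comap inr).index, Nat.mem_divisors.2
      ⟨(Dvd.intro _ (index_eq_index_comap_inr_mul_index_map_fst H.1).symm).trans (dvd_of_eq H.2),
        hm⟩⟩,
    ⟨_, rfl⟩, ⟨H.1, rfl, map_fst_eq_zmultiples_div H.2 hm⟩⟩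
  invFun x := ⟨x.2.2.1, by
    rw [index_eq_index_comap_inr_mul_index_map_fst, x.2.2.2.1, x.2.2.2.2, Int.index_zmultiples,
      Int.natAbs_natCast, x.2.1.2, Nat.mul_div_cancel' (Nat.dvd_of_mem_divisors x.1.2)]⟩
  left_inv _ := rfl
  right_inv := fun ⟨⟨_, _⟩, ⟨_, rfl⟩, ⟨_, rfl, _⟩⟩ => rfl

theorem enatCard_index_int_prod (hm : m ≠ 0) :
    ENat.card {H : AddSubgroup (ℤ × A) // H.index = m} =
      ∑ e ∈ m.divisors, e * ENat.card {H₀ : AddSubgroup A // H₀.index = e} := by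
  rw [ENat.card_congr (subgroupsOfIndexEquivSigma hm), ENat.card_sigma, ← sum_coe_sort m.divisors]
  refine sum_congr rfl fun ⟨e, he⟩ _ => ?_
  have he0 : e ≠ 0 := (Nat.pos_of_mem_divisors he).ne'
  have hd : ((m / e : ℕ) : ℤ) ≠ 0 := by
    exact_mod_cast (Nat.div_pos (Nat.divisor_le he) (Nat.pos_of_ne_zero he0)).ne'
  rw [ENat.card_sigma_of_card_eq (c := e) fun H₀ => ?_, mul_comm]
  have : H₀.1.FiniteIndex := ⟨H₀.2.symm ▸ he0⟩
  rw [enatCard_comap_inr_map_fst _ hd, ENat.card_eq_coe_natCard, ← index_eq_card, H₀.2]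

end IntProd

def weightedFactorizationSum (n m : ℕ) : ℕ :=
  ∑ d ∈ Nat.finMulAntidiag n m, ∏ i, d i ^ (i : ℕ)

theorem weightedFactorizationSum_zero (m : ℕ) :
    weightedFactorizationSum 0 m = if m = 1 then 1 else 0 := by
  split_ifs with hm
  · simp [weightedFactorizationSum, hm, Nat.finMulAntidiag_one]
  · rw [weightedFactorizationSum, Nat.finMulAntidiag_zero_left hm, sum_empty]

theorem weightedFactorizationSum_succ (n m : ℕ) :
    weightedFactorizationSum (n + 1) m = ∑ e ∈ m.divisors, e * weightedFactorizationSum n e := by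
  simp only [weightedFactorizationSum, mul_sum]
  rw [sum_sigma']
  refine sum_nbij' (fun d => ⟨∏ i, Fin.tail d i, Fin.tail d⟩) (fun x => Fin.cons (m / x.1) x.2)
    ?_ ?_ ?_ ?_ ?_
  · intro d hd
    rw [Nat.mem_finMulAntidiag, Fin.prod_univ_succ] at hd
    simp only [mem_sigma, Nat.mem_divisors, Nat.mem_finMulAntidiag]
    exact ⟨⟨Dvd.intro_left _ hd.1, hd.2⟩, trivial, right_ne_zero_of_mul (hd.1 ▸ hd.2)⟩
  · rintro ⟨e, t⟩ h
    simp only [mem_sigma, Nat.mem_divisors, Nat.mem_finMulAntidiag] at h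
    rw [Nat.mem_finMulAntidiag, Fin.prod_univ_succ]
    simp [h.2.1, Nat.div_mul_cancel h.1.1, h.1.2]
  · intro d hd
    rw [Nat.mem_finMulAntidiag, Fin.prod_univ_succ] at hd
    have h0 : m / ∏ i : Fin n, d i.succ = d 0 := by
      rw [← hd.1, Nat.mul_div_cancel _ (Nat.pos_of_ne_zero (right_ne_zero_of_mul (hd.1 ▸ hd.2)))]
    change Fin.cons (m / ∏ i : Fin n, d i.succ) (Fin.tail d) = d
    rw [h0, Fin.cons_self_tail]
  · rintro ⟨e, t⟩ h
    simp only [mem_sigma, Nat.mem_finMulAntidiag] at h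
    simp [Fin.tail_cons, h.2.1]
  · intro d _
    rw [Fin.prod_univ_succ, Fin.val_zero, pow_zero, one_mul, ← prod_mul_distrib]
    simp [Fin.tail, pow_succ']

theorem enatCard_index_pi_int (n : ℕ) {m : ℕ} (hm : m ≠ 0) :
    ENat.card {H : AddSubgroup (Fin n → ℤ) // H.index = m} = weightedFactorizationSum n m := by
  induction n generalizing m with
  | zero =>
    rw [enatCard_index_of_subsingleton, weightedFactorizationSum_zero]
    split_ifs <;> simp
  | succ n ih =>
    rw [enatCard_index_congr (Fin.consLinearEquiv ℤ fun _ => ℤ).toAddEquiv.symm,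
      enatCard_index_int_prod hm, weightedFactorizationSum_succ]
    push_cast
    exact sum_congr rfl fun e he => by rw [ih (Nat.pos_of_mem_divisors he).ne']

theorem sublattice_count_eq_sum_ordered_factorizations_general
    (n m : ℕ) (hm : 0 < m) :
    sublatticeCount n m =
      ∑ d ∈ (Fintype.piFinset fun _ : Fin n => m.divisors).filter
          (fun d => ∏ i, d i = m),
        ∏ i, (d i) ^ (i : ℕ) := by
  rw [← Nat.finMulAntidiag_eq_piFinset_divisors_filter dvd_rfl hm.ne']
  have hcard := enatCard_index_pi_int n hm.ne'
  have : Finite {H : AddSubgroup (Fin n → ℤ) // H.index = m} :=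
    ENat.card_lt_top.1 (hcard ▸ ENat.natCast_lt_top _)
  rw [ENat.card_eq_coe_natCard, Nat.cast_inj] at hcard
  exact hcard

theorem sublattice_count_eq_sum_ordered_factorizations
    (n m : ℕ) (hn : 1 ≤ n) (hm : 0 < m) :
    sublatticeCount n m =
      ∑ d ∈ (Fintype.piFinset fun _ : Fin n => m.divisors).filter
          (fun d => ∏ i, d i = m),
        ∏ i, (d i) ^ (i : ℕ) :=
  sublattice_count_eq_sum_ordered_factorizations_general n m hm
end

section
/- For a prime p and k ≥ 0, the number of subgroups of index p^k in ℤ^n equals the Gaussian binomial coefficient [n+k−1 choose k] evaluated at q = p. -/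
/-!
A subgroup `H ≤ A × ℤ` is determined by its trace `H₀ = H ∩ A`, the generator `d ≥ 0` of its
image in `ℤ`, and the class modulo `H₀` of any `v` with `(v, d) ∈ H`; moreover
`[A × ℤ : H] = [A : H₀] · d`. Counting the `|A ⧸ H₀| = [A : H₀]` choices of the class, the number
of subgroups of index `m ≠ 0` of `A × ℤ` is `∑_{e ∣ m} e · #{H₀ ≤ A of index e}`. For `A = ℤⁿ`
and `m = p^k` this is the recursion `c(n + 1, k) = ∑_{i ≤ k} p^i c(n, i)`, `c(0, k) = [k = 0]`,
which the Gaussian binomials `[n + k - 1 choose k]_p` satisfy by the q-Pascal rule.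
-/

open Finset

section QMultichoose
variable {K : Type*} [Field K]

/-- The Gaussian binomial `[n + k - 1 choose k]_q`, the q-analogue of `Nat.multichoose n k`. -/
def qMultichoose (q : K) (n k : ℕ) : K :=
  ∏ i ∈ range k, (1 - q ^ (n + i)) / (1 - q ^ (i + 1))

@[simp]
lemma qMultichoose_zero_right (q : K) (n : ℕ) : qMultichoose q n 0 = 1 := by
  simp [qMultichoose]

lemma qMultichoose_zero_left (q : K) (k : ℕ) :
    qMultichoose q 0 k = if k = 0 then 1 else 0 := by
  cases k <;> simp [qMultichoose, prod_range_succ']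

lemma qMultichoose_succ_right (q : K) (n k : ℕ) :
    qMultichoose q n (k + 1) = qMultichoose q n k * ((1 - q ^ (n + k)) / (1 - q ^ (k + 1))) :=
  prod_range_succ _ _

lemma qMultichoose_succ_right_mul (q : K) (n k : ℕ) (hq : q ^ (k + 1) ≠ 1) :
    qMultichoose q n (k + 1) * (1 - q ^ (k + 1)) = (1 - q ^ n) * qMultichoose q (n + 1) k := by
  have hk : (1 : K) - q ^ (k + 1) ≠ 0 := sub_ne_zero.mpr hq.symm
  simp only [qMultichoose, prod_div_distrib]
  rw [prod_range_succ' (fun i => 1 - q ^ (n + i)), prod_range_succ (fun i => 1 - q ^ (i + 1))]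
  simp_rw [← add_assoc, Nat.add_right_comm n _ 1, add_zero]
  rw [div_mul_eq_mul_div, mul_div_mul_right _ _ hk, mul_comm _ (1 - q ^ n), mul_div_assoc]

lemma qMultichoose_succ_succ (q : K) (n k : ℕ) (hq : q ^ (k + 1) ≠ 1) :
    qMultichoose q (n + 1) (k + 1) =
      qMultichoose q (n + 1) k + q ^ (k + 1) * qMultichoose q n (k + 1) := by
  have hk : (1 : K) - q ^ (k + 1) ≠ 0 := sub_ne_zero.mpr hq.symm
  rw [qMultichoose_succ_right, eq_div_of_mul_eq hk (qMultichoose_succ_right_mul q n k hq)]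
  field_simp
  ring

lemma sum_pow_mul_qMultichoose (q : K) (hq : ∀ j, q ^ (j + 1) ≠ 1) (n k : ℕ) :
    ∑ i ∈ range (k + 1), q ^ i * qMultichoose q n i = qMultichoose q (n + 1) k := by
  induction k with
  | zero => simp
  | succ k ih => rw [sum_range_succ, ih, qMultichoose_succ_succ q n k (hq k)]

end QMultichoose

lemma Int.eq_zmultiples_index (H : AddSubgroup ℤ) : H = AddSubgroup.zmultiples (H.index : ℤ) := by
  obtain ⟨a, rfl⟩ := Int.subgroup_cyclic H
  rw [← AddSubgroup.zmultiples_eq_closure, Int.index_zmultiples, Int.zmultiples_natAbs]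

lemma Int.natCast_div_ne_zero_of_mem_divisors {m e : ℕ} (he : e ∈ m.divisors) :
    ((m / e : ℕ) : ℤ) ≠ 0 := by
  obtain ⟨hem, hm⟩ := Nat.mem_divisors.mp he
  exact_mod_cast (Nat.div_ne_zero_iff_of_dvd hem).mpr ⟨hm, ne_zero_of_dvd_ne_zero hm hem⟩

namespace AddSubgroup
open AddMonoidHom QuotientAddGroup

lemma index_eq_index_comap_inl_mul_index_map_snd {A B : Type*} [AddCommGroup A] [AddCommGroup B]
    (H : AddSubgroup (A × B)) :
    H.index = (H.comap (inl A B)).index * (H.map (snd A B)).index := by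
  have hker : (inl A B).range = (snd A B).ker := by
    ext ⟨a, b⟩
    simp [eq_comm, mem_prod]
  rw [index_comap, index_map, (snd A B).range_eq_top_of_surjective Prod.snd_surjective,
    index_top, mul_one, hker, ← relIndex_sup_left, relIndex_mul_index le_sup_left]

variable {A : Type*} [AddCommGroup A]

/-- By `exists_eq_extendInt`, every `H ≤ A × ℤ` is `extendInt (H ∩ A) d v`, where `dℤ` is the
image of `H` in `ℤ` and `(v, d)` lifts to an element of `H`. -/
def extendInt (H₀ : AddSubgroup A) (d : ℤ) (v : A ⧸ H₀) : AddSubgroup (A × ℤ) :=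
  (zmultiples (v, d)).comap ((mk' H₀).prodMap (AddMonoidHom.id ℤ))

section ExtendInt
variable {H₀ : AddSubgroup A} {d : ℤ} {v : A ⧸ H₀}

lemma mem_extendInt {x : A × ℤ} :
    x ∈ extendInt H₀ d v ↔ ∃ m : ℤ, m • v = x.1 ∧ m * d = x.2 := by
  simp [extendInt, mem_zmultiples_iff, Prod.ext_iff]

lemma comap_inl_extendInt (hd : d ≠ 0) : (extendInt H₀ d v).comap (inl A ℤ) = H₀ := by
  ext x
  simp [mem_extendInt, hd, eq_comm (a := (0 : A ⧸ H₀))]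

lemma map_snd_extendInt : (extendInt H₀ d v).map (snd A ℤ) = zmultiples d := by
  ext t
  simp only [mem_map, mem_extendInt, coe_snd, Int.mem_zmultiples_iff]
  constructor
  · rintro ⟨x, ⟨m, -, hm⟩, rfl⟩
    exact ⟨m, by rw [← hm, mul_comm]⟩
  · rintro ⟨m, rfl⟩
    obtain ⟨x, hx⟩ := mk_surjective (m • v)
    exact ⟨(x, d * m), ⟨m, hx.symm, mul_comm m d⟩, rfl⟩

lemma index_extendInt (hd : d ≠ 0) : (extendInt H₀ d v).index = H₀.index * d.natAbs := by
  rw [index_eq_index_comap_inl_mul_index_map_snd, comap_inl_extendInt hd, map_snd_extendInt,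
    Int.index_zmultiples]

lemma eq_of_extendInt_eq {v' : A ⧸ H₀} (hd : d ≠ 0)
    (h : extendInt H₀ d v = extendInt H₀ d v') : v = v' := by
  obtain ⟨x, rfl⟩ := mk_surjective v
  have hx : ((x, d) : A × ℤ) ∈ extendInt H₀ d v' := h ▸ mem_extendInt.mpr ⟨1, by simp⟩
  obtain ⟨m, hm, hmd⟩ := mem_extendInt.mp hx
  obtain rfl : m = 1 := by simpa [hd] using hmd
  simpa using hm.symm

end ExtendInt

lemma exists_eq_extendInt (H : AddSubgroup (A × ℤ)) :
    ∃ v, H = extendInt (H.comap (inl A ℤ)) (H.map (snd A ℤ)).index v := by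
  set d : ℤ := ((H.map (snd A ℤ)).index : ℤ)
  have hd : H.map (snd A ℤ) = zmultiples d := Int.eq_zmultiples_index _
  obtain ⟨⟨x, t⟩, hxH, rfl⟩ : d ∈ H.map (snd A ℤ) := hd ▸ mem_zmultiples d
  refine ⟨QuotientAddGroup.mk x, ?_⟩
  ext ⟨y, s⟩
  simp_rw [mem_extendInt, ← QuotientAddGroup.mk_zsmul]
  have hshift (m : ℤ) (hs : m * d = s) : (y, s) - m • (x, d) = inl A ℤ (y - m • x) := by
    simp [← hs]
  constructor
  · intro hy
    obtain ⟨m, hm⟩ : d ∣ s := Int.mem_zmultiples_iff.mp (hd ▸ mem_map_of_mem _ hy)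
    refine ⟨m, ?_, by rw [hm, mul_comm]⟩
    rw [eq_comm, eq_iff_sub_mem, mem_comap, ← hshift m (by rw [hm, mul_comm])]
    exact H.sub_mem hy (H.zsmul_mem hxH m)
  · rintro ⟨m, hm, hs⟩
    rw [eq_comm, eq_iff_sub_mem, mem_comap, ← hshift m hs] at hm
    simpa using H.add_mem hm (H.zsmul_mem hxH m)

noncomputable def extendIntOfIndex (m : ℕ) :
    (Σ e : m.divisors, Σ H₀ : {H₀ : AddSubgroup A // H₀.index = e}, A ⧸ H₀.1) →
      {H : AddSubgroup (A × ℤ) // H.index = m}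
  | ⟨e, H₀, v⟩ => ⟨extendInt H₀.1 (m / e : ℕ) v, by
      rw [index_extendInt (Int.natCast_div_ne_zero_of_mem_divisors e.2), H₀.2,
        Int.natAbs_natCast, Nat.mul_div_cancel' (Nat.dvd_of_mem_divisors e.2)]⟩

lemma extendIntOfIndex_bijective {m : ℕ} (hm : m ≠ 0) :
    Function.Bijective (extendIntOfIndex (A := A) m) := by
  constructor
  · rintro ⟨e, ⟨H₀, hH₀⟩, v⟩ ⟨e', ⟨H₀', hH₀'⟩, v'⟩ h
    have hd := Int.natCast_div_ne_zero_of_mem_divisors e.2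
    have h' : extendInt H₀ (m / e : ℕ) v = extendInt H₀' (m / e' : ℕ) v' :=
      congrArg Subtype.val h
    obtain rfl : H₀ = H₀' := by
      simpa only [comap_inl_extendInt hd,
        comap_inl_extendInt (Int.natCast_div_ne_zero_of_mem_divisors e'.2)]
        using congrArg (comap (inl A ℤ)) h'
    obtain rfl : e = e' := Subtype.ext (hH₀.symm.trans hH₀')
    obtain rfl := eq_of_extendInt_eq hd h'
    rfl
  · rintro ⟨H, hH⟩
    obtain ⟨v, hv⟩ := exists_eq_extendInt H
    have hidx := index_eq_index_comap_inl_mul_index_map_snd H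
    rw [hH] at hidx
    have he : (H.comap (inl A ℤ)).index ∈ m.divisors :=
      Nat.mem_divisors.mpr ⟨Dvd.intro _ hidx.symm, hm⟩
    have hd : m / (H.comap (inl A ℤ)).index = (H.map (snd A ℤ)).index := by
      rw [hidx, Nat.mul_div_cancel_left _ (Nat.pos_of_mem_divisors he)]
    refine ⟨⟨⟨_, he⟩, ⟨_, rfl⟩, v⟩, Subtype.ext ?_⟩
    simp only [extendIntOfIndex, hd]
    exact hv.symm

lemma finite_quotient_of_index_mem_divisors {m : ℕ} {e : m.divisors}
    (H₀ : {H₀ : AddSubgroup A // H₀.index = e}) : Finite (A ⧸ H₀.1) :=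
  Nat.finite_of_card_ne_zero <| by
    rw [← index_eq_card, H₀.2]
    exact (Nat.pos_of_mem_divisors e.2).ne'

lemma finite_sigma_quotient {m : ℕ} (e : m.divisors)
    [Finite {H₀ : AddSubgroup A // H₀.index = e}] :
    Finite (Σ H₀ : {H₀ : AddSubgroup A // H₀.index = e}, A ⧸ H₀.1) :=
  have := finite_quotient_of_index_mem_divisors (A := A) (e := e)
  inferInstance

lemma card_sigma_quotient {m : ℕ} (e : m.divisors)
    [Finite {H₀ : AddSubgroup A // H₀.index = e}] :
    Nat.card (Σ H₀ : {H₀ : AddSubgroup A // H₀.index = e}, A ⧸ H₀.1) =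
      e * Nat.card {H₀ : AddSubgroup A // H₀.index = e} := by
  have := finite_quotient_of_index_mem_divisors (A := A) (e := e)
  have := Fintype.ofFinite {H₀ : AddSubgroup A // H₀.index = e}
  calc _ = ∑ H₀ : {H₀ : AddSubgroup A // H₀.index = e}, Nat.card (A ⧸ H₀.1) := Nat.card_sigma
    _ = ∑ _H₀ : {H₀ : AddSubgroup A // H₀.index = e}, (e : ℕ) :=
      sum_congr rfl fun H₀ _ => by rw [← index_eq_card, H₀.2]
    _ = _ := by simp [Nat.card_eq_fintype_card, mul_comm]

lemma finite_index_prod_int {m : ℕ} (hm : m ≠ 0)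
    (hA : ∀ e ∈ m.divisors, Finite {H₀ : AddSubgroup A // H₀.index = e}) :
    Finite {H : AddSubgroup (A × ℤ) // H.index = m} := by
  have (e : m.divisors) := hA e e.2
  have := finite_sigma_quotient (A := A) (m := m)
  exact Finite.of_surjective _ (extendIntOfIndex_bijective hm).2

lemma card_index_prod_int {m : ℕ} (hm : m ≠ 0)
    (hA : ∀ e ∈ m.divisors, Finite {H₀ : AddSubgroup A // H₀.index = e}) :
    Nat.card {H : AddSubgroup (A × ℤ) // H.index = m} =
      ∑ e ∈ m.divisors, e * Nat.card {H₀ : AddSubgroup A // H₀.index = e} := by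
  have (e : m.divisors) := hA e e.2
  have := finite_sigma_quotient (A := A) (m := m)
  rw [← Nat.card_congr (Equiv.ofBijective _ (extendIntOfIndex_bijective hm)), Nat.card_sigma,
    ← sum_coe_sort m.divisors]
  exact sum_congr rfl fun e _ => card_sigma_quotient e

end AddSubgroup

def piFinSuccAddEquivProd (M : Type*) [Add M] (n : ℕ) : (Fin (n + 1) → M) ≃+ (Fin n → M) × M :=
  { (Fin.consEquiv fun _ => M).symm.trans (Equiv.prodComm M (Fin n → M)) with
    map_add' := fun _ _ => rfl }

def AddEquiv.indexAddSubgroupEquiv {A B : Type*} [AddGroup A] [AddGroup B] (e : A ≃+ B)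
    (m : ℕ) : {H : AddSubgroup A // H.index = m} ≃ {H : AddSubgroup B // H.index = m} :=
  e.mapAddSubgroup.toEquiv.subtypeEquiv fun H => by simp [AddSubgroup.index_map_equiv]

lemma sublatticeCount_zero (m : ℕ) : sublatticeCount 0 m = if m = 1 then 1 else 0 := by
  have h (H : AddSubgroup (Fin 0 → ℤ)) : H.index = 1 :=
    AddSubgroup.index_eq_one.mpr (Subsingleton.elim _ _)
  rcases eq_or_ne m 1 with rfl | hm
  · simp [sublatticeCount, h]
  · simp [sublatticeCount, h, hm, hm.symm]

lemma finite_sublattices (n : ℕ) {m : ℕ} (hm : m ≠ 0) :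
    Finite {H : AddSubgroup (Fin n → ℤ) // H.index = m} := by
  induction n generalizing m with
  | zero => exact Finite.of_subsingleton
  | succ n ih =>
    have := AddSubgroup.finite_index_prod_int hm fun e he => ih (Nat.pos_of_mem_divisors he).ne'
    exact Finite.of_equiv _ ((piFinSuccAddEquivProd ℤ n).indexAddSubgroupEquiv m).symm

lemma sublatticeCount_succ (n : ℕ) {m : ℕ} (hm : m ≠ 0) :
    sublatticeCount (n + 1) m = ∑ e ∈ m.divisors, e * sublatticeCount n e := by
  rw [sublatticeCount, Nat.card_congr ((piFinSuccAddEquivProd ℤ n).indexAddSubgroupEquiv m),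
    AddSubgroup.card_index_prod_int hm fun e he =>
      finite_sublattices n (Nat.pos_of_mem_divisors he).ne']
  rfl

lemma sublatticeCount_prime_pow {p : ℕ} (hp : p.Prime) (n k : ℕ) :
    (sublatticeCount n (p ^ k) : ℚ) = qMultichoose (p : ℚ) n k := by
  induction n generalizing k with
  | zero => simp [sublatticeCount_zero, qMultichoose_zero_left, hp.ne_one]
  | succ n ih =>
    have hq (j : ℕ) : (p : ℚ) ^ (j + 1) ≠ 1 :=
      (one_lt_pow₀ (by exact_mod_cast hp.one_lt) j.succ_ne_zero).ne'
    rw [sublatticeCount_succ n (pow_ne_zero k hp.ne_zero), Nat.sum_divisors_prime_pow hp,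
      ← sum_pow_mul_qMultichoose _ hq]
    push_cast
    simp_rw [ih]

theorem sublattice_count_prime_pow_eq_gaussBinomial (n k p : ℕ)
    (hn : 1 ≤ n) (hp : p.Prime) :
    (sublatticeCount n (p ^ k) : ℚ) =
      ∏ i ∈ Finset.Icc 1 k, (1 - (p : ℚ) ^ (n - 1 + i)) / (1 - (p : ℚ) ^ i) := by
  rw [sublatticeCount_prime_pow hp, qMultichoose, ← Ico_add_one_right_eq_Icc,
    prod_Ico_eq_prod_range, add_tsub_cancel_right]
  refine prod_congr rfl fun i _ => ?_
  rw [add_comm 1 i, show n - 1 + (i + 1) = n + i by omega]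
end
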